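/- arXiv:0908.4125 — 3 statements merged into one kernel-verified Lean document; each statement's English description precedes it below -/
import Mathlib

section
/- Let α, α_l, α_r be real numbers with 0 < α_l < α_r < α. Then there exist a real β with 0 < β < α/3 and integers ℓ' ≥ 2 and d' with 0 ≤ d' ≤ ℓ'−2 such that for every real M > 0, the region Y(ℓ', d', M/(α(ℓ'+3))) (built from the parameters α and β) satisfies Y(ℓ', d', M/(α(ℓ'+3))) ⊆ W(α_l, α_r, M) − (M/(ℓ'+3), 0); that is, for every (x,t) ∈ Y(ℓ', d', M/(α(ℓ'+3))) one has (x + M/(ℓ'+3), t) ∈ W(α_l, α_r, M). -/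
open Set

/-- The wedge `W(a_l, a_r, M) = {(x,t) : t ≥ 0, a_l t ≤ x ≤ M + a_r t}` as a subset of `ℝ²`. -/
def wedge (al ar M : ℝ) : Set (ℝ × ℝ) :=
  {p | 0 ≤ p.2 ∧ al * p.2 ≤ p.1 ∧ p.1 ≤ M + ar * p.2}

/-- Translate a subset of `ℝ²` by a vector. -/
def shiftSet (v : ℝ × ℝ) (S : Set (ℝ × ℝ)) : Set (ℝ × ℝ) :=
  (fun p => v + p) '' S

/-- The large left parallelogram `L00`. -/
def bigL (α β M : ℝ) : Set (ℝ × ℝ) :=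
  {p | 0 ≤ p.2 ∧ p.2 ≤ M * (1 + β / α) ∧
    M * β / 2 ≤ p.1 + α * p.2 ∧ p.1 + α * p.2 ≤ 3 * M * β / 2}

/-- The large right parallelogram `R00`. -/
def bigR (α β M : ℝ) : Set (ℝ × ℝ) :=
  {p | 0 ≤ p.2 ∧ p.2 ≤ M * (1 + β / α) ∧
    -(3 * M * β / 2) ≤ p.1 - α * p.2 ∧ p.1 - α * p.2 ≤ -(M * β / 2)}

/-- The small left parallelogram `L00small`. -/
def smallL (α β M : ℝ) : Set (ℝ × ℝ) :=
  {p | 0 ≤ p.2 ∧ p.2 ≤ 3 * M * β / (2 * α) ∧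
    M * β / 2 ≤ p.1 + α * p.2 ∧ p.1 + α * p.2 ≤ 3 * M * β / 2}

/-- The small right parallelogram `R00small`. -/
def smallR (α β M : ℝ) : Set (ℝ × ℝ) :=
  {p | 0 ≤ p.2 ∧ p.2 ≤ 3 * M * β / (2 * α) ∧
    -(3 * M * β / 2) ≤ p.1 - α * p.2 ∧ p.1 - α * p.2 ≤ -(M * β / 2)}

/-- The translation vector `v_jk = (M j (α−β), M k)`. -/
def vjk (α β M : ℝ) (j k : ℤ) : ℝ × ℝ := (M * (j : ℝ) * (α - β), M * (k : ℝ))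

def Ljk (α β M : ℝ) (j k : ℤ) : Set (ℝ × ℝ) := shiftSet (vjk α β M j k) (bigL α β M)
def Rjk (α β M : ℝ) (j k : ℤ) : Set (ℝ × ℝ) := shiftSet (vjk α β M j k) (bigR α β M)
def Lsjk (α β M : ℝ) (j k : ℤ) : Set (ℝ × ℝ) := shiftSet (vjk α β M j k) (smallL α β M)
def Rsjk (α β M : ℝ) (j k : ℤ) : Set (ℝ × ℝ) := shiftSet (vjk α β M j k) (smallR α β M)

/-- The region `Y00` built from `ℓ` big right parallelograms with small left connectors and
two branches of big left parallelograms with small right connectors. -/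
def Y00 (α β M : ℝ) (ℓ d : ℤ) : Set (ℝ × ℝ) :=
  bigR α β M ∪
  (⋃ i ∈ Finset.Icc (1 : ℤ) ℓ, (Rjk α β M i i ∪ Lsjk α β M i i)) ∪
  Ljk α β M ℓ ℓ ∪
  (if 1 ≤ d then Ljk α β M (ℓ + 1) (ℓ + 1) else ∅) ∪
  (if d = 1 then Ljk α β M (ℓ - 1) (ℓ + 1) ∪ Rsjk α β M (ℓ - 1) (ℓ + 1) else ∅) ∪
  (if 2 ≤ d then
    (⋃ i ∈ Finset.Ico (0 : ℤ) d,
      (Ljk α β M (ℓ - i) (ℓ + i) ∪ Rsjk α β M (ℓ - i) (ℓ + i) ∪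
        Ljk α β M (ℓ + 1 - i) (ℓ + 1 + i) ∪ Rsjk α β M (ℓ + 1 - i) (ℓ + 1 + i))) ∪
    Ljk α β M (ℓ - d) (ℓ + d) ∪ Rsjk α β M (ℓ - d) (ℓ + d)
  else ∅)

/-- The shiftSet `Y_jk` of `Y00`. -/
def Yjk (α β M : ℝ) (ℓ d j k : ℤ) : Set (ℝ × ℝ) :=
  shiftSet (M * ((k * (ℓ - d) + j : ℤ) : ℝ) * (α - β), M * (k : ℝ) * ((ℓ + d + 1 : ℤ) : ℝ))
    (Y00 α β M ℓ d)

/-- The full region `Y(ℓ,d,M) = ⋃_{(j,k) ∈ 𝕃, −k ≤ j ≤ k} Y_jk`. -/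
def Yreg (α β M : ℝ) (ℓ d : ℤ) : Set (ℝ × ℝ) :=
  ⋃ (j : ℤ) (k : ℤ) (_ : 0 ≤ k ∧ Even (j + k) ∧ -k ≤ j ∧ j ≤ k), Yjk α β M ℓ d j k

/-!
Translating by a vector of the cone `W(α_l, α_r, 0)` maps `W(α_l, α_r, M)` into itself. With
`M₀ = M/(α(ℓ+3))`, the translates `Y_jk` of `Y00` are offset by nonnegative combinations of the two
periods `M₀ ((ℓ - d ± 1)(α - β), ℓ + d + 1)`, and with `β = (α - α_r)/3` (so that `α_r ≤ α - β`),
taking `ℓ - d` large and `d` as small as the right-hand inequality allows puts both periods in the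
cone. So it suffices that `Y00 + (α M₀, 0) ⊆ W`. This is checked cell by cell: a cell sitting at
`v_ab` with `a ≤ ℓ + 1` lies in the wedge as soon as `a (α - β) - α_l b` is not too small, which
holds trivially on the staircase `a = b` and, by the left period inequality, on the two branches
`a + b ∈ {2ℓ, 2ℓ + 2}`.
-/

theorem add_mem_wedge {al ar M N : ℝ} {p q : ℝ × ℝ} (hp : p ∈ wedge al ar M)
    (hq : q ∈ wedge al ar N) : p + q ∈ wedge al ar (M + N) := by
  obtain ⟨hp0, hpl, hpr⟩ := hp
  obtain ⟨hq0, hql, hqr⟩ := hq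
  simp only [wedge, mem_ofPred_eq, Prod.fst_add, Prod.snd_add, mul_add]
  exact ⟨by linarith, by linarith, by linarith⟩

theorem lattice_offset_mem_wedge {γ αl αr M₀ : ℝ} {ℓ d j k : ℤ} (hM₀ : 0 ≤ M₀) (hγ : 0 ≤ γ)
    (hℓd : 0 ≤ ℓ + d + 1) (hjk : -k ≤ j) (hkj : j ≤ k)
    (hSL : αl * (ℓ + d + 1) ≤ (ℓ - d - 1) * γ) (hSR : (ℓ - d + 1) * γ ≤ αr * (ℓ + d + 1)) :
    (M₀ * ((k * (ℓ - d) + j : ℤ) : ℝ) * γ, M₀ * (k : ℝ) * ((ℓ + d + 1 : ℤ) : ℝ)) ∈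
      wedge αl αr 0 := by
  have hk : (0 : ℝ) ≤ k := by exact_mod_cast (by omega : 0 ≤ k)
  have hMk : 0 ≤ M₀ * k := mul_nonneg hM₀ hk
  have hk_add : (0 : ℝ) ≤ k + j := by exact_mod_cast (by omega : 0 ≤ k + j)
  have hk_sub : (0 : ℝ) ≤ k - j := by exact_mod_cast (by omega : 0 ≤ k - j)
  simp only [wedge, mem_ofPred_eq, zero_add]
  push_cast
  refine ⟨mul_nonneg hMk (by exact_mod_cast hℓd), ?_, ?_⟩
  · nlinarith [mul_le_mul_of_nonneg_left hSL hMk, mul_nonneg (mul_nonneg hM₀ hk_add) hγ]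
  · nlinarith [mul_le_mul_of_nonneg_left hSR hMk, mul_nonneg (mul_nonneg hM₀ hk_sub) hγ]

theorem exists_periods_in_cone {γ αl αr : ℝ} (hαl : 0 < αl) (hlr : αl < αr) (hrγ : αr ≤ γ) :
    ∃ ℓ d : ℤ, 0 ≤ d ∧ d + 2 ≤ ℓ ∧ αl * (ℓ + d + 1) ≤ (ℓ - d - 1) * γ ∧
      (ℓ - d + 1) * γ ≤ αr * (ℓ + d + 1) := by
  have hγ : 0 < γ := by linarith
  obtain ⟨n, hn⟩ := exists_nat_gt ((γ * (αr + αl) + 2 * αl * αr) / (γ * (αr - αl)))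
  rw [div_lt_iff₀ (mul_pos hγ (by linarith))] at hn
  -- `m` plays the role of `ℓ - d`; the bound `hn` on it makes room for the rounding in `d`.
  set m : ℤ := n + 2 with hm
  set d : ℤ := ⌈(m + 1) * (γ - αr) / (2 * αr)⌉
  have hd_lo : (m + 1) * (γ - αr) ≤ 2 * αr * d := by
    rw [← div_le_iff₀' (by linarith)]
    exact Int.le_ceil _
  have hd_hi : 2 * αr * (d - 1) < (m + 1) * (γ - αr) := by
    rw [← lt_div_iff₀' (by linarith), sub_lt_iff_lt_add]
    exact Int.ceil_lt_add_one _
  have hnm : (n : ℝ) ≤ m := by simp [hm]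
  have hd : 0 ≤ d := Int.ceil_nonneg (div_nonneg (mul_nonneg (by positivity) (by linarith))
    (by linarith))
  refine ⟨m + d, d, hd, by omega, ?_, ?_⟩
  · push_cast
    rw [← mul_le_mul_iff_right₀ (by linarith : 0 < αr)]
    nlinarith [mul_lt_mul_of_pos_left hd_hi hαl, mul_pos hγ (by linarith : 0 < αr - αl)]
  · push_cast
    linarith

theorem smallR_subset_bigR {α β M : ℝ} (hα : 0 < α) (hβ : β ≤ 2 * α) (hM : 0 ≤ M) :
    smallR α β M ⊆ bigR α β M := by
  rintro p ⟨h0, h1, h2, h3⟩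
  refine ⟨h0, h1.trans ?_, h2, h3⟩
  rw [div_le_iff₀ (by positivity), mul_assoc M, show (1 + β / α) * (2 * α) = 2 * (α + β) by
    field_simp]
  nlinarith

section Cells

variable {α β αl αr M₀ N : ℝ} {a b : ℤ} {q : ℝ × ℝ}

theorem shift_mem_wedge_of_mem_Rjk (hα : 0 < α) (hβ : 0 ≤ β) (hβα : 3 * β ≤ α)
    (hαl : αl ≤ α) (hαr : 0 ≤ αr) (hM₀ : 0 ≤ M₀) (hb : 0 ≤ b) (ha : (a : ℝ) + 2 ≤ N)
    (hN : 3 ≤ N) (hslack : αl * b ≤ a * (α - β)) (hq : q ∈ Rjk α β M₀ a b) :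
    (α * M₀, 0) + q ∈ wedge αl αr (α * M₀ * N) := by
  obtain ⟨⟨u, s⟩, ⟨h0, h1, h2, h3⟩, rfl⟩ := hq
  have hs : α * s ≤ M₀ * (α + β) := by
    calc α * s ≤ α * (M₀ * (1 + β / α)) := by gcongr
      _ = M₀ * (α + β) := by field_simp
  have hb' : (0 : ℝ) ≤ b := by exact_mod_cast hb
  have haN : M₀ * (a * (α - β)) ≤ M₀ * ((N - 2) * (α - β)) :=
    mul_le_mul_of_nonneg_left (mul_le_mul_of_nonneg_right (by linarith) (by linarith)) hM₀
  have hN3 : 0 ≤ M₀ * β * (N - 3) := mul_nonneg (mul_nonneg hM₀ hβ) (by linarith)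
  simp only [vjk, wedge, mem_ofPred_eq, Prod.mk_add_mk] at *
  refine ⟨by positivity, ?_, ?_⟩
  · nlinarith [mul_le_mul_of_nonneg_left hslack hM₀, mul_nonneg (sub_nonneg.2 hαl) h0]
  · nlinarith [mul_nonneg hαr h0, mul_nonneg (mul_nonneg hαr hM₀) hb']

theorem shift_mem_wedge_of_mem_Ljk (hα : 0 < α) (hβ : 0 ≤ β) (hβα : 3 * β ≤ α)
    (hαl0 : 0 ≤ αl) (hαl : αl ≤ α) (hαr : 0 ≤ αr) (hM₀ : 0 ≤ M₀) (hb : 0 ≤ b)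
    (ha : (a : ℝ) + 2 ≤ N) (hN : 3 ≤ N) (hslack : α - β + αl + αl * b ≤ a * (α - β))
    (hq : q ∈ Ljk α β M₀ a b) :
    (α * M₀, 0) + q ∈ wedge αl αr (α * M₀ * N) := by
  obtain ⟨⟨u, s⟩, ⟨h0, h1, h2, h3⟩, rfl⟩ := hq
  have hs : α * s ≤ M₀ * (α + β) := by
    calc α * s ≤ α * (M₀ * (1 + β / α)) := by gcongr
      _ = M₀ * (α + β) := by field_simp
  have hb' : (0 : ℝ) ≤ b := by exact_mod_cast hb
  have haN : M₀ * (a * (α - β)) ≤ M₀ * ((N - 2) * (α - β)) :=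
    mul_le_mul_of_nonneg_left (mul_le_mul_of_nonneg_right (by linarith) (by linarith)) hM₀
  have hN3 : 0 ≤ M₀ * β * (N - 3) := mul_nonneg (mul_nonneg hM₀ hβ) (by linarith)
  simp only [vjk, wedge, mem_ofPred_eq, Prod.mk_add_mk] at *
  refine ⟨by positivity, ?_, ?_⟩
  · rw [← mul_le_mul_iff_right₀ hα]
    nlinarith [mul_le_mul_of_nonneg_left hslack hM₀, mul_le_mul_of_nonneg_left hs hαl0,
      mul_nonneg (mul_nonneg hM₀ hβ) (sub_nonneg.2 hαl),
      mul_nonneg (mul_nonneg hM₀ hα.le) (by linarith : 0 ≤ α - 3 * β)]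
  · nlinarith [mul_nonneg hαr h0, mul_nonneg (mul_nonneg hαr hM₀) hb', mul_nonneg hα.le h0]

theorem shift_mem_wedge_of_mem_Lsjk (hα : 0 < α) (hβ : 0 ≤ β) (hβα : 3 * β ≤ α)
    (hαl : αl ≤ α) (hαr : 0 ≤ αr) (hM₀ : 0 ≤ M₀) (hb : 0 ≤ b)
    (ha : (a : ℝ) + 2 ≤ N) (hN : 3 ≤ N) (hslack : αl * b ≤ a * (α - β))
    (hq : q ∈ Lsjk α β M₀ a b) :
    (α * M₀, 0) + q ∈ wedge αl αr (α * M₀ * N) := by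
  obtain ⟨⟨u, s⟩, ⟨h0, h1, h2, h3⟩, rfl⟩ := hq
  have hs : α * s ≤ 3 * M₀ * β / 2 := by
    calc α * s ≤ α * (3 * M₀ * β / (2 * α)) := by gcongr
      _ = 3 * M₀ * β / 2 := by field_simp
  have hb' : (0 : ℝ) ≤ b := by exact_mod_cast hb
  have haN : M₀ * (a * (α - β)) ≤ M₀ * ((N - 2) * (α - β)) :=
    mul_le_mul_of_nonneg_left (mul_le_mul_of_nonneg_right (by linarith) (by linarith)) hM₀
  have hN3 : 0 ≤ M₀ * β * (N - 3) := mul_nonneg (mul_nonneg hM₀ hβ) (by linarith)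
  simp only [vjk, wedge, mem_ofPred_eq, Prod.mk_add_mk] at *
  refine ⟨by positivity, ?_, ?_⟩
  · nlinarith [mul_le_mul_of_nonneg_left hslack hM₀, mul_le_mul_of_nonneg_right hαl h0]
  · nlinarith [mul_nonneg hαr h0, mul_nonneg (mul_nonneg hαr hM₀) hb', mul_nonneg hα.le h0]

end Cells

theorem left_slack_of_branch {γ αl ℓ d a b : ℝ} (hαl0 : 0 ≤ αl) (hαl : αl ≤ γ)
    (hSL : αl * (ℓ + d + 1) ≤ (ℓ - d - 1) * γ) (hsum : 2 * ℓ ≤ a + b) (hdiff : b - a ≤ 2 * d) :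
    γ + αl + αl * b ≤ a * γ := by
  nlinarith [mul_le_mul_of_nonneg_right hsum (sub_nonneg.2 hαl),
    mul_le_mul_of_nonneg_right hdiff (by linarith : 0 ≤ γ + αl)]

theorem shift_mem_wedge_of_mem_Y00 {α β αl αr M₀ : ℝ} {ℓ d : ℤ} (hα : 0 < α) (hβ : 0 ≤ β)
    (hβα : 3 * β ≤ α) (hαl0 : 0 ≤ αl) (hlr : αl ≤ αr) (hrγ : αr ≤ α - β) (hM₀ : 0 ≤ M₀)
    (hd : 0 ≤ d) (hdℓ : d + 2 ≤ ℓ) (hSL : αl * (ℓ + d + 1) ≤ (ℓ - d - 1) * (α - β))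
    {q : ℝ × ℝ} (hq : q ∈ Y00 α β M₀ ℓ d) :
    (α * M₀, 0) + q ∈ wedge αl αr (α * M₀ * (ℓ + 3)) := by
  have hℓ : (3 : ℝ) ≤ ℓ + 3 := by exact_mod_cast (by omega : 3 ≤ ℓ + 3)
  have hαl : αl ≤ α := by linarith
  have hαr : 0 ≤ αr := by linarith
  -- the branch cells are `(ℓ - i, ℓ + i)` and `(ℓ + 1 - i, ℓ + 1 + i)` with `0 ≤ i ≤ d`
  have branch : ∀ a b : ℤ, 2 * ℓ ≤ a + b → b - a ≤ 2 * d → a ≤ ℓ + 1 →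
      q ∈ Ljk α β M₀ a b ∪ Rsjk α β M₀ a b →
      (α * M₀, 0) + q ∈ wedge αl αr (α * M₀ * (ℓ + 3)) := by
    intro a b hsum hdiff ha hq
    have hslack := left_slack_of_branch (a := a) (b := b) hαl0 (by linarith) hSL
      (by exact_mod_cast hsum) (by exact_mod_cast hdiff)
    have hb : 0 ≤ b := by omega
    have ha' : (a : ℝ) + 2 ≤ ℓ + 3 := by exact_mod_cast (by omega : a + 2 ≤ ℓ + 3)
    rcases hq with hq | hq
    · exact shift_mem_wedge_of_mem_Ljk hα hβ hβα hαl0 hαl hαr hM₀ hb ha' hℓ hslack hq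
    · refine shift_mem_wedge_of_mem_Rjk hα hβ hβα hαl hαr hM₀ hb ha' hℓ (by linarith) ?_
      exact image_mono (smallR_subset_bigR hα (by linarith) hM₀) hq
  have spine : ∀ i : ℤ, 0 ≤ i → i ≤ ℓ → q ∈ Rjk α β M₀ i i ∪ Lsjk α β M₀ i i →
      (α * M₀, 0) + q ∈ wedge αl αr (α * M₀ * (ℓ + 3)) := by
    intro i hi0 hiℓ hq
    have hi : (0 : ℝ) ≤ i := by exact_mod_cast hi0
    have hslack : αl * i ≤ i * (α - β) := by nlinarith
    have ha : (i : ℝ) + 2 ≤ ℓ + 3 := by exact_mod_cast (by omega : i + 2 ≤ ℓ + 3)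
    rcases hq with hq | hq
    · exact shift_mem_wedge_of_mem_Rjk hα hβ hβα hαl hαr hM₀ hi0 ha hℓ hslack hq
    · exact shift_mem_wedge_of_mem_Lsjk hα hβ hβα hαl hαr hM₀ hi0 ha hℓ hslack hq
  simp only [Y00, mem_union, mem_iUnion, mem_ite_empty_right, Finset.mem_Icc,
    Finset.mem_Ico] at hq
  rcases hq with (((((hR | ⟨i, hi, hR | hLs⟩) | hL) | ⟨-, hL⟩) | ⟨hd1, hL | hL⟩) |
    ⟨-, (⟨i, hi, ((hL | hL) | hL) | hL⟩ | hL) | hL⟩)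
  · exact spine 0 le_rfl (by omega) (.inl ⟨q, hR, by simp [vjk]⟩)
  · exact spine i (by omega) hi.2 (.inl hR)
  · exact spine i (by omega) hi.2 (.inr hLs)
  all_goals first
    | exact branch _ _ (by omega) (by omega) (by omega) (.inl hL)
    | exact branch _ _ (by omega) (by omega) (by omega) (.inr hL)

/-- The containment Claim: for `0 < α_l < α_r < α` there are `β ∈ (0, α/3)` and integers
`ℓ' ≥ 2`, `0 ≤ d' ≤ ℓ' − 2` such that for every `M > 0`,
`Y(ℓ', d', M/(α(ℓ'+3))) ⊆ W(α_l, α_r, M) − (M/(ℓ'+3), 0)`. -/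
theorem containment_claim (α αl αr : ℝ) (h1 : 0 < αl) (h2 : αl < αr) (h3 : αr < α) :
    ∃ (β : ℝ) (ℓ' d' : ℤ), 0 < β ∧ β < α / 3 ∧ 2 ≤ ℓ' ∧ 0 ≤ d' ∧ d' ≤ ℓ' - 2 ∧
      ∀ M : ℝ, 0 < M →
        ∀ p ∈ Yreg α β (M / (α * ((ℓ' : ℝ) + 3))) ℓ' d',
          (p.1 + M / ((ℓ' : ℝ) + 3), p.2) ∈ wedge αl αr M := by
  set β := (α - αr) / 3 with hβ
  obtain ⟨ℓ, d, hd, hdℓ, hSL, hSR⟩ := exists_periods_in_cone h1 h2 (by linarith : αr ≤ α - β)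
  refine ⟨β, ℓ, d, by linarith, by linarith, by omega, hd, by omega, ?_⟩
  intro M hM p hp
  have hℓ : (0 : ℝ) < ℓ + 3 := by exact_mod_cast (by omega : 0 < ℓ + 3)
  have hα : 0 < α := by linarith
  set M₀ := M / (α * (ℓ + 3)) with hM₀
  have hM : α * M₀ * (ℓ + 3) = M := by rw [hM₀]; field_simp
  have hshift : M / (ℓ + 3) = α * M₀ := by rw [hM₀]; field_simp
  simp only [Yreg, Yjk, mem_iUnion] at hp
  obtain ⟨j, k, ⟨-, -, hjk, hkj⟩, q, hq, rfl⟩ := hp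
  have hoff := lattice_offset_mem_wedge (M₀ := M₀) (by positivity) (by linarith) (by omega)
    hjk hkj hSL hSR
  have hY := shift_mem_wedge_of_mem_Y00 hα (by positivity) (by linarith) h1.le h2.le
    (by linarith) (by positivity) hd hdℓ hSL hq
  have := add_mem_wedge hoff hY
  rw [zero_add, hM] at this
  convert this using 1
  ext <;> simp only [Prod.fst_add, Prod.snd_add, hshift] <;> ring
end

section
/- Let α, s_l, s_r be real numbers with α > 0, 0 < s_r < s_l, and α·s_r > 1. Then there exist integers m and c and a real number β such that: m ≥ 2, m > 3/(α·s_r), s_r·m/(m−1) < s_l, (2/3)·α·m·s_r < c < α·m·s_r, c ≥ m, β = α − c/(m·s_r), 0 < β < α/3, and, setting s'_l = s_r·m/(m−1) (which satisfies s_r < s'_l < s_l), the quantities ℓ' = s_r·(s'_l·(α−β)+1)/(s'_l − s_r) and d' = s'_l·(s_r·(α−β)−1)/(s'_l − s_r) are equal to the integers c+m−1 and c−m respectively, and satisfy 0 ≤ d' ≤ ℓ' − 3. -/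
/-!
Take `m` so large that `m > 3 / (α s_r)` and `m > s_l / (s_l - s_r)`, and let `c` be the largest
integer below `α m s_r > 3`, so that `α m s_r - 1 ≤ c < α m s_r`. With `s'_l = s_r m / (m - 1)`
one has `s'_l - s_r = s_r / (m - 1)`, and `β = α - c / (m s_r)` makes `α - β = c / (m s_r)`;
substituting, `ℓ'` and `d'` collapse to `c + m - 1` and `c - m`.
-/

lemma lt_mul_div_sub_one {sr m : ℝ} (hsr : 0 < sr) (hm : 1 < m) : sr < sr * m / (m - 1) := by
  rw [lt_div_iff₀ (by linarith)]
  nlinarith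

lemma mul_div_sub_one_lt {sr sl m : ℝ} (hsr : 0 < sr) (hsrsl : sr < sl)
    (hm : sl / (sl - sr) < m) : sr * m / (m - 1) < sl := by
  have hgap : 0 < sl - sr := by linarith
  have hm' : sl < m * (sl - sr) := (div_lt_iff₀ hgap).mp hm
  rw [div_lt_iff₀ (by nlinarith)]
  nlinarith

lemma exists_int_sub_one_le_lt (x : ℝ) : ∃ c : ℤ, x - 1 ≤ c ∧ (c : ℝ) < x :=
  ⟨⌈x⌉ - 1, by push_cast; linarith [Int.le_ceil x], by push_cast; linarith [Int.ceil_lt_add_one x]⟩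

lemma sub_div_pos_and_lt_third {α p c : ℝ} (hp : 0 < p) (hc : 2 / 3 * α * p < c)
    (hc' : c < α * p) : 0 < α - c / p ∧ α - c / p < α / 3 := by
  have hlt : c / p < α := (div_lt_iff₀ hp).mpr hc'
  have hgt : 2 / 3 * α < c / p := (lt_div_iff₀ hp).mpr hc
  constructor <;> linarith

lemma slope_sub_eq {sr m : ℝ} (hm1 : m - 1 ≠ 0) : sr * m / (m - 1) - sr = sr / (m - 1) := by
  field_simp
  ring

lemma ell'_eq_add_sub_one {sr m : ℝ} (c : ℝ) (hsr : sr ≠ 0) (hm : m ≠ 0) (hm1 : m - 1 ≠ 0) :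
    sr * (sr * m / (m - 1) * (c / (m * sr)) + 1) / (sr * m / (m - 1) - sr) = c + m - 1 := by
  rw [slope_sub_eq hm1]
  field_simp
  ring

lemma d'_eq_sub {sr m : ℝ} (c : ℝ) (hsr : sr ≠ 0) (hm : m ≠ 0) (hm1 : m - 1 ≠ 0) :
    sr * m / (m - 1) * (sr * (c / (m * sr)) - 1) / (sr * m / (m - 1) - sr) = c - m := by
  rw [slope_sub_eq hm1]
  field_simp

theorem integrality_step_general (α sl sr : ℝ) (hsr : 0 < sr) (hsrsl : sr < sl)
    (hαsr : 1 < α * sr) :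
    ∃ (m c : ℤ) (β : ℝ),
      2 ≤ m ∧
      3 / (α * sr) < (m : ℝ) ∧
      sr * (m : ℝ) / ((m : ℝ) - 1) < sl ∧
      2 / 3 * α * (m : ℝ) * sr < (c : ℝ) ∧
      (c : ℝ) < α * (m : ℝ) * sr ∧
      m ≤ c ∧
      β = α - (c : ℝ) / ((m : ℝ) * sr) ∧
      0 < β ∧ β < α / 3 ∧
      sr < sr * (m : ℝ) / ((m : ℝ) - 1) ∧
      sr * (m : ℝ) / ((m : ℝ) - 1) < sl ∧
      sr * ((sr * (m : ℝ) / ((m : ℝ) - 1)) * (α - β) + 1) /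
          (sr * (m : ℝ) / ((m : ℝ) - 1) - sr) = ((c + m - 1 : ℤ) : ℝ) ∧
      (sr * (m : ℝ) / ((m : ℝ) - 1)) * (sr * (α - β) - 1) /
          (sr * (m : ℝ) / ((m : ℝ) - 1) - sr) = ((c - m : ℤ) : ℝ) ∧
      0 ≤ c - m ∧ c - m ≤ (c + m - 1) - 3 := by
  obtain ⟨m, hm⟩ := exists_int_gt (max 2 (max (3 / (α * sr)) (sl / (sl - sr))))
  simp only [max_lt_iff] at hm
  obtain ⟨hm2, hm3, hmsl⟩ := hm
  have hm2' : 2 ≤ m := by exact_mod_cast hm2.le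
  have hslope := mul_div_sub_one_lt hsr hsrsl hmsl
  have hx3 : 3 < α * m * sr := by
    have := (div_lt_iff₀ (by linarith : (0 : ℝ) < α * sr)).mp hm3
    linarith
  have hmx : (m : ℝ) < α * m * sr := by nlinarith
  obtain ⟨c, hc, hc'⟩ := exists_int_sub_one_le_lt (α * m * sr)
  have hmc : m ≤ c := Int.lt_add_one_iff.mp (by exact_mod_cast (by linarith : (m : ℝ) < c + 1))
  have hβ := sub_div_pos_and_lt_third (α := α) (c := c) (by positivity : (0 : ℝ) < m * sr)
    (by linarith) (by linarith)
  have hm0 : (m : ℝ) ≠ 0 := by linarith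
  have hm1 : (m : ℝ) - 1 ≠ 0 := by linarith
  refine ⟨m, c, α - c / (m * sr), hm2', hm3, hslope, by linarith, hc', hmc,
    rfl, hβ.1, hβ.2, lt_mul_div_sub_one hsr (by linarith), hslope, ?_, ?_, by omega, by omega⟩
  · rw [sub_sub_cancel]
    push_cast
    exact ell'_eq_add_sub_one c hsr.ne' hm0 hm1
  · rw [sub_sub_cancel]
    push_cast
    exact d'_eq_sub c hsr.ne' hm0 hm1

/-- The integrality step: one can choose `m`, `c` and `β` so that the parameters
`ℓ' = c+m−1` and `d' = c−m` are integers with `0 ≤ d' ≤ ℓ' − 3`. -/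
theorem integrality_step (α sl sr : ℝ) (hα : 0 < α) (hsr : 0 < sr) (hsrsl : sr < sl)
    (hαsr : 1 < α * sr) :
    ∃ (m c : ℤ) (β : ℝ),
      2 ≤ m ∧
      3 / (α * sr) < (m : ℝ) ∧
      sr * (m : ℝ) / ((m : ℝ) - 1) < sl ∧
      2 / 3 * α * (m : ℝ) * sr < (c : ℝ) ∧
      (c : ℝ) < α * (m : ℝ) * sr ∧
      m ≤ c ∧
      β = α - (c : ℝ) / ((m : ℝ) * sr) ∧
      0 < β ∧ β < α / 3 ∧
      sr < sr * (m : ℝ) / ((m : ℝ) - 1) ∧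
      sr * (m : ℝ) / ((m : ℝ) - 1) < sl ∧
      sr * ((sr * (m : ℝ) / ((m : ℝ) - 1)) * (α - β) + 1) /
          (sr * (m : ℝ) / ((m : ℝ) - 1) - sr) = ((c + m - 1 : ℤ) : ℝ) ∧
      (sr * (m : ℝ) / ((m : ℝ) - 1)) * (sr * (α - β) - 1) /
          (sr * (m : ℝ) / ((m : ℝ) - 1) - sr) = ((c - m : ℤ) : ℝ) ∧
      0 ≤ c - m ∧ c - m ≤ (c + m - 1) - 3 :=
  integrality_step_general α sl sr hsr hsrsl hαsr
end

section
/- Let α > 0, 0 < β < α/3, M > 0 be reals and let ℓ ≥ 2 and d with 0 ≤ d < ℓ be integers. If (j,k) and (j',k') are points of the lattice 𝕃 = {(j,k) ∈ ℤ² : k ≥ 0 and j+k is even} with ‖(j,k)−(j',k')‖ := (|j−j'|+|k−k'|)/2 > 1 (equivalently |j−j'|+|k−k'| > 2), then the regions Y_jk and Y_{j'k'} are disjoint. -/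
/-!
Measure heights in units of `M` and horizontal lengths in units of `α M`, and put `γ = β / α < 1/3`.
Then `L_ab` and `R_ab` are thin strips along the segments joining the node `(a, b)` to the nodes
`(a - 1, b + 1)` and `(a + 1, b + 1)` of a slanted lattice, while the small pieces `Ls_ab`, `Rs_ab`
stay close to their lower node `(a, b)`. As `γ < 1/3`, two pieces indexed by points with `a + b`
even can only meet near a node of both (parity excludes two strips crossing between levels).
Hence if `Y_jk` and `Y_j'k'` meet, so do their node sets. The nodes of `Y00` lie on the trunk
`x = y ≤ ℓ + 1` and the branches `x + y = 2ℓ`, `x + y = 2ℓ + 2`; they fill the levels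
`0, …, ℓ + d + 1`, level `0` only at the origin, and at each level span a width of at most `2`.
Two translates by `(k (ℓ - d) + j, k (ℓ + d + 1))` therefore share a node only if
`|j - j'| + |k - k'| ≤ 2`.
-/

open Set

theorem vjk_add (α β M : ℝ) (a b x y : ℤ) :
    vjk α β M a b + vjk α β M x y = vjk α β M (a + x) (b + y) := by
  ext <;> simp only [vjk, Prod.fst_add, Prod.snd_add] <;> push_cast <;> ring

noncomputable def unitCoords (α M : ℝ) (p : ℝ × ℝ) : ℝ × ℝ := (p.1 / (α * M), p.2 / M)

def slab (b : ℤ) (h : ℝ) : Set (ℝ × ℝ) := {q | (b : ℝ) ≤ q.2 ∧ q.2 ≤ b + h}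

def leftStrip (γ : ℝ) (a b : ℤ) : Set (ℝ × ℝ) :=
  {q | a * (1 - γ) + b + γ / 2 ≤ q.1 + q.2 ∧ q.1 + q.2 ≤ a * (1 - γ) + b + 3 * γ / 2}

def rightStrip (γ : ℝ) (a b : ℤ) : Set (ℝ × ℝ) :=
  {q | a * (1 - γ) - b - 3 * γ / 2 ≤ q.1 - q.2 ∧ q.1 - q.2 ≤ a * (1 - γ) - b - γ / 2}

section UnitCoords

variable {α β M : ℝ} {a b : ℤ} {q : ℝ × ℝ}

theorem unitCoords_vjk_add_mem_slab (hM : 0 < M) {h : ℝ} (h₀ : 0 ≤ q.2) (h₁ : q.2 ≤ M * h) :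
    unitCoords α M (vjk α β M a b + q) ∈ slab b h := by
  have key : (unitCoords α M (vjk α β M a b + q)).2 = b + q.2 / M := by
    simp only [unitCoords, vjk, Prod.snd_add]
    field_simp
  have hq₀ : 0 ≤ q.2 / M := div_nonneg h₀ hM.le
  have hq₁ : q.2 / M ≤ h := (div_le_iff₀' hM).2 h₁
  exact ⟨by linarith, by linarith⟩

theorem unitCoords_vjk_add_mem_leftStrip (hα : 0 < α) (hM : 0 < M)
    (h₀ : M * β / 2 ≤ q.1 + α * q.2) (h₁ : q.1 + α * q.2 ≤ 3 * M * β / 2) :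
    unitCoords α M (vjk α β M a b + q) ∈ leftStrip (β / α) a b := by
  have key : (unitCoords α M (vjk α β M a b + q)).1 + (unitCoords α M (vjk α β M a b + q)).2
      = a * (1 - β / α) + b + (q.1 + α * q.2) / (α * M) := by
    simp only [unitCoords, vjk, Prod.fst_add, Prod.snd_add]
    field_simp
    ring
  have hαM : 0 < α * M := mul_pos hα hM
  have e₀ : M * β / 2 / (α * M) = β / α / 2 := by field_simp
  have e₁ : 3 * M * β / 2 / (α * M) = 3 * (β / α) / 2 := by field_simp
  have d₀ := div_le_div_of_nonneg_right h₀ hαM.le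
  have d₁ := div_le_div_of_nonneg_right h₁ hαM.le
  exact ⟨by linarith, by linarith⟩

theorem unitCoords_vjk_add_mem_rightStrip (hα : 0 < α) (hM : 0 < M)
    (h₀ : -(3 * M * β / 2) ≤ q.1 - α * q.2) (h₁ : q.1 - α * q.2 ≤ -(M * β / 2)) :
    unitCoords α M (vjk α β M a b + q) ∈ rightStrip (β / α) a b := by
  have key : (unitCoords α M (vjk α β M a b + q)).1 - (unitCoords α M (vjk α β M a b + q)).2
      = a * (1 - β / α) - b + (q.1 - α * q.2) / (α * M) := by
    simp only [unitCoords, vjk, Prod.fst_add, Prod.snd_add]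
    field_simp
    ring
  have hαM : 0 < α * M := mul_pos hα hM
  have e₀ : -(M * β / 2) / (α * M) = -(β / α / 2) := by field_simp
  have e₁ : -(3 * M * β / 2) / (α * M) = -(3 * (β / α) / 2) := by field_simp
  have d₀ := div_le_div_of_nonneg_right h₀ hαM.le
  have d₁ := div_le_div_of_nonneg_right h₁ hαM.le
  exact ⟨by linarith, by linarith⟩

end UnitCoords

theorem lt_and_lt_of_mul_lt_mul {R : Type*} [Ring R] [LinearOrder R] [IsStrictOrderedRing R]
    {m k₁ k₂ : ℤ} {c : R} (hc : 0 < c) (h₁ : (k₁ : R) * c < m * c) (h₂ : (m : R) * c < k₂ * c) :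
    k₁ < m ∧ m < k₂ :=
  ⟨by exact_mod_cast lt_of_mul_lt_mul_right h₁ hc.le,
    by exact_mod_cast lt_of_mul_lt_mul_right h₂ hc.le⟩

theorem eq_sub_one_or_eq_or_eq_add_one_of_mem_slab {b b' : ℤ} {h : ℝ} {q : ℝ × ℝ} (hh : h < 2)
    (hq : q ∈ slab b h) (hq' : q ∈ slab b' h) : b' = b - 1 ∨ b' = b ∨ b' = b + 1 := by
  obtain ⟨h₀, h₁⟩ := hq
  obtain ⟨h₀', h₁'⟩ := hq'
  have : b' < b + 2 := by exact_mod_cast (show (b' : ℝ) < b + 2 by linarith)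
  have : b < b' + 2 := by exact_mod_cast (show (b : ℝ) < b' + 2 by linarith)
  omega

inductive Shape
  | L | R | Ls | Rs

namespace Shape

def base (α β M : ℝ) : Shape → Set (ℝ × ℝ)
  | L => bigL α β M
  | R => bigR α β M
  | Ls => smallL α β M
  | Rs => smallR α β M

def piece (α β M : ℝ) (σ : Shape) (a b : ℤ) : Set (ℝ × ℝ) :=
  shiftSet (vjk α β M a b) (σ.base α β M)

def model (γ : ℝ) : Shape → ℤ → ℤ → Set (ℝ × ℝ)
  | L, a, b => leftStrip γ a b ∩ slab b (1 + γ)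
  | R, a, b => rightStrip γ a b ∩ slab b (1 + γ)
  | Ls, a, b => leftStrip γ a b ∩ slab b (3 * γ / 2)
  | Rs, a, b => rightStrip γ a b ∩ slab b (3 * γ / 2)

def big : Shape → Shape
  | L | Ls => L
  | R | Rs => R

def nodes : Shape → ℤ → ℤ → Set (ℤ × ℤ)
  | L, a, b => {(a, b), (a - 1, b + 1)}
  | R, a, b => {(a, b), (a + 1, b + 1)}
  | Ls, a, b | Rs, a, b => {(a, b)}

variable {α β M γ : ℝ} {σ τ : Shape} {a b a' b' : ℤ} {p q : ℝ × ℝ}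

theorem unitCoords_mem_model (hα : 0 < α) (hM : 0 < M) (hp : p ∈ σ.piece α β M a b) :
    unitCoords α M p ∈ σ.model (β / α) a b := by
  obtain ⟨q, hq, rfl⟩ := hp
  have hsmall : 3 * M * β / (2 * α) = M * (3 * (β / α) / 2) := by ring
  cases σ <;> obtain ⟨h₀, h₁, h₂, h₃⟩ := hq
  · exact ⟨unitCoords_vjk_add_mem_leftStrip hα hM h₂ h₃, unitCoords_vjk_add_mem_slab hM h₀ h₁⟩
  · exact ⟨unitCoords_vjk_add_mem_rightStrip hα hM h₂ h₃, unitCoords_vjk_add_mem_slab hM h₀ h₁⟩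
  · exact ⟨unitCoords_vjk_add_mem_leftStrip hα hM h₂ h₃,
      unitCoords_vjk_add_mem_slab hM h₀ (hsmall ▸ h₁)⟩
  · exact ⟨unitCoords_vjk_add_mem_rightStrip hα hM h₂ h₃,
      unitCoords_vjk_add_mem_slab hM h₀ (hsmall ▸ h₁)⟩

theorem vjk_add_mem_piece (x y : ℤ) (hq : q ∈ σ.piece α β M a b) :
    vjk α β M x y + q ∈ σ.piece α β M (x + a) (y + b) := by
  obtain ⟨r, hr, rfl⟩ := hq
  exact ⟨r, hr, by rw [← add_assoc, vjk_add]⟩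

theorem sub_mem_nodes {A B x y : ℤ} {ν : ℤ × ℤ} (hν : ν ∈ σ.nodes (A + x) (B + y)) :
    (ν.1 - A, ν.2 - B) ∈ σ.nodes x y := by
  cases σ <;> simp only [nodes, Set.mem_insert_iff, Set.mem_singleton_iff, Prod.ext_iff] at hν ⊢ <;>
    omega

theorem model_subset_big (hγ : γ < 1 / 3) : σ.model γ a b ⊆ σ.big.model γ a b := by
  have hslab : slab b (3 * γ / 2) ⊆ slab b (1 + γ) := fun q ⟨h₀, h₁⟩ => ⟨h₀, by linarith⟩
  cases σ
  exacts [subset_rfl, subset_rfl, inter_subset_inter_right _ hslab,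
    inter_subset_inter_right _ hslab]

theorem mem_nodes_of_mem_big_nodes (hγ : γ < 1 / 3) (hq : q ∈ σ.model γ a b) {ν : ℤ × ℤ}
    (hν : ν ∈ σ.big.nodes a b) (hνq : (ν.2 : ℝ) ≤ q.2 + γ / 2) : ν ∈ σ.nodes a b := by
  cases σ
  · exact hν
  · exact hν
  all_goals
    obtain ⟨-, -, hT⟩ := hq
    rcases hν with rfl | rfl
    · rfl
    · push_cast at hνq
      linarith

-- The bound on the height of the shared node is what keeps it at the lower node of a small piece.
theorem exists_common_node_L_L (hγ : γ < 1 / 3) (hq : q ∈ L.model γ a b)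
    (hq' : q ∈ L.model γ a' b') : ∃ ν ∈ L.nodes a b ∩ L.nodes a' b', (ν.2 : ℝ) ≤ q.2 + γ / 2 := by
  obtain ⟨⟨hU₀, hU₁⟩, hT⟩ := hq
  obtain ⟨⟨hU₀', hU₁'⟩, hT'⟩ := hq'
  have hc : 0 < 1 - γ := by linarith
  rcases eq_sub_one_or_eq_or_eq_add_one_of_mem_slab (by linarith) hT hT' with h | h | h <;>
    subst b' <;> obtain ⟨hT₀', -⟩ := hT' <;> push_cast at hU₀' hU₁' hT₀'
  · obtain ⟨h₁, h₂⟩ := lt_and_lt_of_mul_lt_mul (m := a' - a) (k₁ := 0) (k₂ := 2) hc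
      (by push_cast; linarith) (by push_cast; linarith)
    obtain rfl : a' = a + 1 := by omega
    exact ⟨(a, b), by simp [nodes], by simp; linarith [hT.1]⟩
  · obtain ⟨h₁, h₂⟩ := lt_and_lt_of_mul_lt_mul (m := a' - a) (k₁ := -1) (k₂ := 1) hc
      (by push_cast; linarith) (by push_cast; linarith)
    have : a' = a := by omega
    subst a'
    exact ⟨(a, b), by simp [nodes], by simp; linarith [hT.1]⟩
  · obtain ⟨h₁, h₂⟩ := lt_and_lt_of_mul_lt_mul (m := a' - a) (k₁ := -2) (k₂ := 0) hc
      (by push_cast; linarith) (by push_cast; linarith)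
    obtain rfl : a' = a - 1 := by omega
    exact ⟨(a - 1, b + 1), by simp [nodes], by push_cast; linarith⟩

theorem exists_common_node_R_R (hγ : γ < 1 / 3) (hq : q ∈ R.model γ a b)
    (hq' : q ∈ R.model γ a' b') : ∃ ν ∈ R.nodes a b ∩ R.nodes a' b', (ν.2 : ℝ) ≤ q.2 + γ / 2 := by
  obtain ⟨⟨hW₀, hW₁⟩, hT⟩ := hq
  obtain ⟨⟨hW₀', hW₁'⟩, hT'⟩ := hq'
  have hc : 0 < 1 - γ := by linarith
  rcases eq_sub_one_or_eq_or_eq_add_one_of_mem_slab (by linarith) hT hT' with h | h | h <;>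
    subst b' <;> obtain ⟨hT₀', -⟩ := hT' <;> push_cast at hW₀' hW₁' hT₀'
  · obtain ⟨h₁, h₂⟩ := lt_and_lt_of_mul_lt_mul (m := a' - a) (k₁ := -2) (k₂ := 0) hc
      (by push_cast; linarith) (by push_cast; linarith)
    obtain rfl : a' = a - 1 := by omega
    exact ⟨(a, b), by simp [nodes], by simp; linarith [hT.1]⟩
  · obtain ⟨h₁, h₂⟩ := lt_and_lt_of_mul_lt_mul (m := a' - a) (k₁ := -1) (k₂ := 1) hc
      (by push_cast; linarith) (by push_cast; linarith)
    have : a' = a := by omega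
    subst a'
    exact ⟨(a, b), by simp [nodes], by simp; linarith [hT.1]⟩
  · obtain ⟨h₁, h₂⟩ := lt_and_lt_of_mul_lt_mul (m := a' - a) (k₁ := 0) (k₂ := 2) hc
      (by push_cast; linarith) (by push_cast; linarith)
    obtain rfl : a' = a + 1 := by omega
    exact ⟨(a + 1, b + 1), by simp [nodes], by push_cast; linarith⟩

theorem exists_common_node_L_R (hγ : γ < 1 / 3) (he : Even (a + b)) (he' : Even (a' + b'))
    (hq : q ∈ L.model γ a b) (hq' : q ∈ R.model γ a' b') :
    ∃ ν ∈ L.nodes a b ∩ R.nodes a' b', (ν.2 : ℝ) ≤ q.2 + γ / 2 := by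
  obtain ⟨⟨hU₀, hU₁⟩, hT⟩ := hq
  obtain ⟨⟨hW₀, hW₁⟩, hT'⟩ := hq'
  have hc : 0 < 1 - γ := by linarith
  rw [Int.even_iff] at he he'
  rcases eq_sub_one_or_eq_or_eq_add_one_of_mem_slab (by linarith) hT hT' with h | h | h <;>
    subst b' <;> obtain ⟨hT₀, hT₁⟩ := hT <;> obtain ⟨hT₀', hT₁'⟩ := hT' <;>
    push_cast at hW₀ hW₁ hT₀' hT₁'
  · obtain ⟨h₁, h₂⟩ := lt_and_lt_of_mul_lt_mul (m := a' - a) (k₁ := -2) (k₂ := 0) hc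
      (by push_cast; linarith) (by push_cast; linarith)
    obtain rfl : a' = a - 1 := by omega
    exact ⟨(a, b), by simp [nodes], by simp; linarith⟩
  · -- parity makes `a' - a` even: the two strips cannot cross between the levels `b`, `b + 1`
    obtain ⟨h₁, h₂⟩ := lt_and_lt_of_mul_lt_mul (m := a' - a) (k₁ := -4) (k₂ := 2) hc
      (by push_cast; linarith) (by push_cast; linarith)
    obtain h | rfl : a' = a ∨ a' = a - 2 := by omega
    · subst a'
      exact ⟨(a, b), by simp [nodes], by simp; linarith⟩
    · refine ⟨(a - 1, b + 1), by simp [nodes]; omega, ?_⟩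
      push_cast at hU₀ hW₁ ⊢
      linarith
  · obtain ⟨h₁, h₂⟩ := lt_and_lt_of_mul_lt_mul (m := a' - a) (k₁ := -2) (k₂ := 0) hc
      (by push_cast; linarith) (by push_cast; linarith)
    obtain rfl : a' = a - 1 := by omega
    exact ⟨(a - 1, b + 1), by simp [nodes], by push_cast; linarith⟩

theorem exists_common_node (hγ : γ < 1 / 3) (he : Even (a + b)) (he' : Even (a' + b'))
    (hq : q ∈ σ.model γ a b) (hq' : q ∈ τ.model γ a' b') :
    ∃ ν ∈ σ.nodes a b, ν ∈ τ.nodes a' b' := by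
  obtain ⟨ν, ⟨hν, hν'⟩, hνq⟩ :
      ∃ ν ∈ σ.big.nodes a b ∩ τ.big.nodes a' b', (ν.2 : ℝ) ≤ q.2 + γ / 2 := by
    have hb := model_subset_big hγ hq
    have hb' := model_subset_big hγ hq'
    obtain hσ | hσ : σ.big = L ∨ σ.big = R := by cases σ <;> simp [big]
    all_goals obtain hτ | hτ : τ.big = L ∨ τ.big = R := by cases τ <;> simp [big]
    all_goals rw [hσ] at hb ⊢; rw [hτ] at hb' ⊢
    · exact exists_common_node_L_L hγ hb hb'
    · exact exists_common_node_L_R hγ he he' hb hb'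
    · exact (exists_common_node_L_R hγ he' he hb' hb).imp fun _ h => ⟨h.1.symm, h.2⟩
    · exact exists_common_node_R_R hγ hb hb'
  exact ⟨ν, mem_nodes_of_mem_big_nodes hγ hq hν hνq, mem_nodes_of_mem_big_nodes hγ hq' hν' hνq⟩

end Shape

/-- A superset of the pieces listed in `Y00`. -/
def IsPiece (ℓ d : ℤ) : Shape → ℤ → ℤ → Prop
  | .R, x, y | .Ls, x, y => 0 ≤ x ∧ x ≤ ℓ ∧ y = x
  | .L, x, y | .Rs, x, y =>
    (x + y = 2 * ℓ ∧ ℓ - d ≤ x ∧ x ≤ ℓ) ∨ (x + y = 2 * ℓ + 2 ∧ ℓ + 2 - d ≤ x ∧ x ≤ ℓ + 1)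

def IsNode (ℓ d x y : ℤ) : Prop :=
  (0 ≤ x ∧ x ≤ ℓ + 1 ∧ y = x) ∨ (x + y = 2 * ℓ ∧ ℓ - d - 1 ≤ x ∧ x ≤ ℓ) ∨
    (x + y = 2 * ℓ + 2 ∧ ℓ + 1 - d ≤ x ∧ x ≤ ℓ + 1)

section Pieces

variable {α β M : ℝ} {ℓ d x y : ℤ} {σ : Shape}

theorem IsPiece.even (h : IsPiece ℓ d σ x y) : Even (x + y) := by
  rw [Int.even_iff]
  cases σ <;> simp only [IsPiece] at h <;> omega

theorem IsPiece.isNode (h : IsPiece ℓ d σ x y) {ν : ℤ × ℤ} (hν : ν ∈ σ.nodes x y) :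
    IsNode ℓ d ν.1 ν.2 := by
  cases σ <;> simp only [IsPiece] at h <;> simp only [Shape.nodes, Set.mem_insert_iff,
    Set.mem_singleton_iff] at hν <;> rcases hν with rfl | rfl <;> simp only [IsNode] <;> omega

theorem exists_piece_of_mem_Y00 (hℓ : 0 ≤ ℓ) (hd : 0 ≤ d) {q : ℝ × ℝ} (hq : q ∈ Y00 α β M ℓ d) :
    ∃ σ x y, IsPiece ℓ d σ x y ∧ q ∈ σ.piece α β M x y := by
  simp only [Y00, Set.mem_union, Set.mem_iUnion, Set.mem_ite_empty_right, Finset.mem_Icc,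
    Finset.mem_Ico, exists_prop] at hq
  rcases hq with ((((hq | ⟨i, hi, hq | hq⟩) | hq) | ⟨hd₁, hq⟩) | ⟨hd₁, hq | hq⟩) |
    ⟨hd₂, (⟨i, hi, ((hq | hq) | hq) | hq⟩ | hq) | hq⟩
  · exact ⟨.R, 0, 0, ⟨le_rfl, hℓ, rfl⟩, q, hq, by simp [vjk]⟩
  · exact ⟨.R, i, i, ⟨by omega, hi.2, rfl⟩, hq⟩
  · exact ⟨.Ls, i, i, ⟨by omega, hi.2, rfl⟩, hq⟩
  · exact ⟨.L, ℓ, ℓ, by simp only [IsPiece]; omega, hq⟩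
  · exact ⟨.L, ℓ + 1, ℓ + 1, by simp only [IsPiece]; omega, hq⟩
  · exact ⟨.L, ℓ - 1, ℓ + 1, by simp only [IsPiece]; omega, hq⟩
  · exact ⟨.Rs, ℓ - 1, ℓ + 1, by simp only [IsPiece]; omega, hq⟩
  · exact ⟨.L, ℓ - i, ℓ + i, by simp only [IsPiece]; omega, hq⟩
  · exact ⟨.Rs, ℓ - i, ℓ + i, by simp only [IsPiece]; omega, hq⟩
  · exact ⟨.L, ℓ + 1 - i, ℓ + 1 + i, by simp only [IsPiece]; omega, hq⟩
  · exact ⟨.Rs, ℓ + 1 - i, ℓ + 1 + i, by simp only [IsPiece]; omega, hq⟩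
  · exact ⟨.L, ℓ - d, ℓ + d, by simp only [IsPiece]; omega, hq⟩
  · exact ⟨.Rs, ℓ - d, ℓ + d, by simp only [IsPiece]; omega, hq⟩

theorem exists_piece_of_mem_Yjk (hℓ : 0 ≤ ℓ) (hd : 0 ≤ d) {j k : ℤ} (hjk : Even (j + k))
    {p : ℝ × ℝ} (hp : p ∈ Yjk α β M ℓ d j k) :
    ∃ (σ : Shape) (a b : ℤ), p ∈ σ.piece α β M a b ∧ Even (a + b) ∧
      ∀ ν ∈ σ.nodes a b, IsNode ℓ d (ν.1 - (k * (ℓ - d) + j)) (ν.2 - k * (ℓ + d + 1)) := by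
  have hv : (M * ((k * (ℓ - d) + j : ℤ) : ℝ) * (α - β), M * (k : ℝ) * ((ℓ + d + 1 : ℤ) : ℝ)) =
      vjk α β M (k * (ℓ - d) + j) (k * (ℓ + d + 1)) :=
    Prod.ext rfl (by simp only [vjk]; push_cast; ring)
  obtain ⟨q, hq, rfl⟩ := hp
  obtain ⟨σ, x, y, hσ, hqσ⟩ := exists_piece_of_mem_Y00 hℓ hd hq
  refine ⟨σ, _, _, hv ▸ σ.vjk_add_mem_piece _ _ hqσ, ?_,
    fun ν hν => hσ.isNode (σ.sub_mem_nodes hν)⟩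
  obtain ⟨r, hr⟩ := hjk
  obtain ⟨s, hs⟩ := hσ.even
  exact ⟨r + s + k * ℓ, by linear_combination hr + hs⟩

end Pieces

theorem IsNode.abs_add_abs_le_two {ℓ d x y x' y' J K : ℤ} (hℓ : 1 ≤ ℓ) (hd : 0 ≤ d)
    (h : IsNode ℓ d x y) (h' : IsNode ℓ d x' y')
    (hx : x' - x = K * (ℓ - d) + J) (hy : y' - y = K * (ℓ + d + 1)) : |J| + |K| ≤ 2 := by
  unfold IsNode at h h'
  have hK : -1 ≤ K ∧ K ≤ 1 := by
    have : 0 ≤ y ∧ y ≤ ℓ + d + 1 := by omega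
    have : 0 ≤ y' ∧ y' ≤ ℓ + d + 1 := by omega
    constructor <;> nlinarith
  rw [Int.abs_eq_natAbs, Int.abs_eq_natAbs]
  obtain rfl | rfl | rfl : K = -1 ∨ K = 0 ∨ K = 1 := by omega
  all_goals omega

theorem Yjk_disjoint_general (α β M : ℝ) (hα : 0 < α) (hβ : β < α / 3) (hM : 0 < M)
    (ℓ d : ℤ) (hℓ : 2 ≤ ℓ) (hd0 : 0 ≤ d)
    (j k j' k' : ℤ) (hjk : Even (j + k)) (hjk' : Even (j' + k'))
    (hfar : 2 < |j - j'| + |k - k'|) :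
    Disjoint (Yjk α β M ℓ d j k) (Yjk α β M ℓ d j' k') := by
  rw [Set.disjoint_left]
  intro p hp hp'
  obtain ⟨σ, a, b, hpσ, hab, hσ⟩ := exists_piece_of_mem_Yjk (by omega) hd0 hjk hp
  obtain ⟨τ, a', b', hpτ, hab', hτ⟩ := exists_piece_of_mem_Yjk (by omega) hd0 hjk' hp'
  have hγ : β / α < 1 / 3 := by rw [div_lt_iff₀ hα]; linarith
  obtain ⟨ν, hν, hν'⟩ := Shape.exists_common_node hγ hab hab'
    (Shape.unitCoords_mem_model hα hM hpσ) (Shape.unitCoords_mem_model hα hM hpτ)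
  exact not_le.2 hfar <|
    (hσ ν hν).abs_add_abs_le_two (J := j - j') (K := k - k') (by omega) hd0 (hτ ν hν') (by ring)
      (by ring)

/-- If `(j,k), (j',k') ∈ 𝕃` satisfy `|j−j'| + |k−k'| > 2`, then the regions `Y_jk` and
`Y_{j'k'}` are disjoint. -/
theorem Yjk_disjoint (α β M : ℝ) (hα : 0 < α) (hβ0 : 0 < β) (hβ : β < α / 3) (hM : 0 < M)
    (ℓ d : ℤ) (hℓ : 2 ≤ ℓ) (hd0 : 0 ≤ d) (hd : d < ℓ)
    (j k j' k' : ℤ) (hk : 0 ≤ k) (hjk : Even (j + k)) (hk' : 0 ≤ k') (hjk' : Even (j' + k'))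
    (hfar : 2 < |j - j'| + |k - k'|) :
    Disjoint (Yjk α β M ℓ d j k) (Yjk α β M ℓ d j' k') :=
  Yjk_disjoint_general α β M hα hβ hM ℓ d hℓ hd0 j k j' k' hjk hjk' hfar
end
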